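/- Let a > 1, q > 0, w ∈ ℝ, T ≥ 1, and consider the constant disturbance sequence w_t = w for all t. Set u* := −q·w/(q + (a − 1)²) and c₁ := ((u* + w)/(1 − a) − w)². Then there exists a control sequence u_0, …, u_T such that the states defined by x_0 = 0 and x_{t+1} = a·x_t + u_t + w satisfy Σ_{t=0}^T (q·x_t² + u_t²) ≤ (q/(q + (a − 1)²))·T·w² + c₁. (Namely, u_0 = (u* + w)/(1 − a) − w and u_t = u* for t ≥ 1, which keeps x_t = (u* + w)/(1 − a) for all t ≥ 1.) -/

import Mathlib

/-!
After the first step the controller parks the state at the fixed point `x̄ = (u* + w)/(1 - a)` of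
`x ↦ a x + u* + w`, so every later stage costs `q x̄² + u*²`. With `D = q + (a - 1)²` one has
`x̄ = -(a - 1) w / D`, whence `q x̄² + u*² = q w² (q + (a - 1)²) / D² = q w² / D`. The first stage
costs `(x̄ - w)² = c₁`, and the bound holds with equality.
-/

open Finset

theorem sum_range_succ_eq_of_forall_succ_eq {M : Type*} [AddCommMonoid M] {f : ℕ → M} {c : M}
    (hf : ∀ t, f (t + 1) = c) (T : ℕ) : ∑ t ∈ range (T + 1), f t = T • c + f 0 := by
  simp [sum_range_succ', hf]

namespace ConstantDisturbance

variable (a q w : ℝ)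

noncomputable def stationaryControl : ℝ := -(q * w) / (q + (a - 1) ^ 2)

noncomputable def fixedPoint (u : ℝ) : ℝ := (u + w) / (1 - a)

theorem fixedPoint_isFixedPt {a : ℝ} (ha : a ≠ 1) (u w : ℝ) :
    a * fixedPoint a w u + u + w = fixedPoint a w u := by
  have : (1 : ℝ) - a ≠ 0 := sub_ne_zero.mpr ha.symm
  unfold fixedPoint
  field_simp
  ring

theorem fixedPoint_stationaryControl {a q : ℝ} (ha : a ≠ 1) (hD : q + (a - 1) ^ 2 ≠ 0) (w : ℝ) :
    fixedPoint a w (stationaryControl a q w) = -((a - 1) * w) / (q + (a - 1) ^ 2) := by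
  have : (1 : ℝ) - a ≠ 0 := sub_ne_zero.mpr ha.symm
  unfold fixedPoint stationaryControl
  field_simp
  ring

theorem stationary_stage_cost {a q : ℝ} (ha : a ≠ 1) (hD : q + (a - 1) ^ 2 ≠ 0) (w : ℝ) :
    q * fixedPoint a w (stationaryControl a q w) ^ 2 + stationaryControl a q w ^ 2
      = q / (q + (a - 1) ^ 2) * w ^ 2 := by
  rw [fixedPoint_stationaryControl ha hD, stationaryControl]
  field_simp
  ring

end ConstantDisturbance

open ConstantDisturbance

theorem stmt18 (a q w : ℝ) (ha : 1 < a) (hq : 0 < q) (T : ℕ)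
    (ustar c1 : ℝ)
    (hustar : ustar = -(q * w) / (q + (a - 1) ^ 2))
    (hc1 : c1 = ((ustar + w) / (1 - a) - w) ^ 2) :
    ∃ u x : ℕ → ℝ, x 0 = 0 ∧ (∀ t : ℕ, x (t + 1) = a * x t + u t + w) ∧
      ∑ t ∈ Finset.range (T + 1), (q * x t ^ 2 + u t ^ 2)
        ≤ q / (q + (a - 1) ^ 2) * T * w ^ 2 + c1 := by
  have ha' : a ≠ 1 := ha.ne'
  have hD : q + (a - 1) ^ 2 ≠ 0 := by positivity
  obtain rfl : ustar = stationaryControl a q w := hustar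
  obtain rfl : c1 = (fixedPoint a w (stationaryControl a q w) - w) ^ 2 := hc1
  set xbar := fixedPoint a w (stationaryControl a q w)
  set ustar := stationaryControl a q w
  refine ⟨fun t => if t = 0 then xbar - w else ustar, fun t => if t = 0 then 0 else xbar,
    rfl, ?_, ?_⟩
  · rintro (_ | t)
    · simp
    · simpa using (fixedPoint_isFixedPt ha' ustar w).symm
  · rw [sum_range_succ_eq_of_forall_succ_eq (c := q * xbar ^ 2 + ustar ^ 2) (fun _ => by simp),
      stationary_stage_cost ha' hD]
    simp only [if_true, nsmul_eq_mul]
    linarith
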